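/- The function v_{γ,b} defined by v_{γ,b}(x) = c_{1,1}(b)·h₁(x) for 0 ≤ x ≤ b, and v_{γ,b}(x) = c_{1,2}(b)·e^{λ_γ(x−b)} + (γ/(γ+δ))·(x − b + c_{1,1}(b)h₁(b) + η/(γ+δ)) for x ≥ b, is twice continuously differentiable on (0,∞), satisfies v_{γ,b}(0) = 0, satisfies (σ²/2)v''(x) + ηv'(x) − δv(x) = 0 for all x ∈ (0,b), and satisfies (σ²/2)v''(x) + ηv'(x) − δv(x) + γ(x − b + v(b) − v(x)) = 0 for all x ∈ (b,∞). -/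

import Mathlib

/-!
Each piece of `v` solves its linear equation because `θ₊`, `θ₋` and `λ_γ` are roots of the
corresponding characteristic polynomials. The constants `c₁₁`, `c₁₂` are exactly what make the
two pieces agree to first order at `b`; agreement to second order is then forced by the
equations themselves, since the extra term `γ (x - b + v b - v x)` vanishes at `x = b`.
A function glued at `b` from two smooth pieces whose derivatives up to order `n` agree there
is `Cⁿ`.
-/


open Real Filter Set

/-- Positive root θ₊ of (σ²/2)r² + ηr − δ = 0. -/
noncomputable def thetaP (σ η δ : ℝ) : ℝ := (-η + Real.sqrt (η ^ 2 + 2 * σ ^ 2 * δ)) / σ ^ 2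

/-- Negative root θ₋ of (σ²/2)r² + ηr − δ = 0. -/
noncomputable def thetaM (σ η δ : ℝ) : ℝ := (-η - Real.sqrt (η ^ 2 + 2 * σ ^ 2 * δ)) / σ ^ 2

/-- h₁(x) = e^{θ₊x} − e^{θ₋x}. -/
noncomputable def h1 (σ η δ : ℝ) (x : ℝ) : ℝ :=
  Real.exp (thetaP σ η δ * x) - Real.exp (thetaM σ η δ * x)

/-- h₁'(x) = θ₊e^{θ₊x} − θ₋e^{θ₋x}. -/
noncomputable def h1' (σ η δ : ℝ) (x : ℝ) : ℝ :=
  thetaP σ η δ * Real.exp (thetaP σ η δ * x) - thetaM σ η δ * Real.exp (thetaM σ η δ * x)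

/-- λ_γ, the negative root of (σ²/2)r² + ηr − (δ+γ) = 0. -/
noncomputable def lamGamma (σ η δ γ : ℝ) : ℝ :=
  (-η - Real.sqrt (η ^ 2 + 2 * σ ^ 2 * (δ + γ))) / σ ^ 2

/-- c_{1,1}(b). -/
noncomputable def c11 (σ η δ γ b : ℝ) : ℝ :=
  ((γ / (γ + δ)) * (1 - η * lamGamma σ η δ γ / (γ + δ))) /
    (h1' σ η δ b - (δ * lamGamma σ η δ γ / (γ + δ)) * h1 σ η δ b)

/-- c_{1,2}(b). -/
noncomputable def c12 (σ η δ γ b : ℝ) : ℝ :=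
  (1 / (γ + δ)) * (δ * c11 σ η δ γ b * h1 σ η δ b - γ * η / (γ + δ))

/-- The candidate value function v_{γ,b}. -/
noncomputable def vGammaB (σ η δ γ b : ℝ) (x : ℝ) : ℝ :=
  if x ≤ b then c11 σ η δ γ b * h1 σ η δ x
  else c12 σ η δ γ b * Real.exp (lamGamma σ η δ γ * (x - b)) +
    (γ / (γ + δ)) * (x - b + c11 σ η δ γ b * h1 σ η δ b + η / (γ + δ))

section Gluing

variable {E : Type*} [NormedAddCommGroup E] [NormedSpace ℝ E] {f g : ℝ → E} {b : ℝ}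

theorem hasDerivAt_ite_le (hf : Differentiable ℝ f) (hg : Differentiable ℝ g)
    (h₀ : f b = g b) (h₁ : deriv f b = deriv g b) (x : ℝ) :
    HasDerivAt (fun y => if y ≤ b then f y else g y)
      (if x ≤ b then deriv f x else deriv g x) x := by
  rcases lt_trichotomy x b with hx | rfl | hx
  · rw [if_pos hx.le]
    refine (hf x).hasDerivAt.congr_of_eventuallyEq ?_
    filter_upwards [Iio_mem_nhds hx] with y hy using if_pos (le_of_lt hy)
  · rw [if_pos le_rfl, ← hasDerivWithinAt_univ, ← Iic_union_Ici]
    refine ((hf x).hasDerivAt.hasDerivWithinAt.congr_of_mem (fun y hy => if_pos hy)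
      self_mem_Iic).union ?_
    rw [h₁]
    refine (hg x).hasDerivAt.hasDerivWithinAt.congr_of_mem (fun y hy => ?_) self_mem_Ici
    rcases (mem_Ici.1 hy).eq_or_lt with rfl | hy
    · simpa using h₀
    · exact if_neg hy.not_ge
  · rw [if_neg hx.not_ge]
    refine (hg x).hasDerivAt.congr_of_eventuallyEq ?_
    filter_upwards [Ioi_mem_nhds hx] with y hy using if_neg (not_le.2 hy)

theorem deriv_ite_le (hf : Differentiable ℝ f) (hg : Differentiable ℝ g)
    (h₀ : f b = g b) (h₁ : deriv f b = deriv g b) :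
    deriv (fun y => if y ≤ b then f y else g y) =
      fun x => if x ≤ b then deriv f x else deriv g x :=
  funext fun x => (hasDerivAt_ite_le hf hg h₀ h₁ x).deriv

theorem contDiff_ite_le {n : ℕ} (hf : ContDiff ℝ n f) (hg : ContDiff ℝ n g)
    (hfg : ∀ k ≤ n, iteratedDeriv k f b = iteratedDeriv k g b) :
    ContDiff ℝ n (fun y => if y ≤ b then f y else g y) := by
  induction n generalizing f g with
  | zero =>
    rw [Nat.cast_zero, contDiff_zero] at *
    exact hf.if_le hg continuous_id continuous_const fun y hy => hy ▸ by simpa using hfg 0 le_rfl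
  | succ n ih =>
    rw [Nat.cast_add, Nat.cast_one, contDiff_succ_iff_deriv] at *
    have h₀ : f b = g b := by simpa using hfg 0 (Nat.zero_le _)
    have h₁ : deriv f b = deriv g b := by simpa using hfg 1 (by omega)
    refine ⟨fun x => (hasDerivAt_ite_le hf.1 hg.1 h₀ h₁ x).differentiableAt, by simp, ?_⟩
    rw [deriv_ite_le hf.1 hg.1 h₀ h₁]
    refine ih hf.2.2 hg.2.2 fun k hk => ?_
    simpa only [iteratedDeriv_succ'] using hfg (k + 1) (by omega)

end Gluing

theorem hasDerivAt_exp_const_mul (r x : ℝ) :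
    HasDerivAt (fun y => exp (r * y)) (r * exp (r * x)) x := by
  simpa [mul_comm] using ((hasDerivAt_id x).const_mul r).exp

theorem hasDerivAt_exp_const_mul_sub (r a x : ℝ) :
    HasDerivAt (fun y => exp (r * (y - a))) (r * exp (r * (x - a))) x := by
  simpa [mul_comm] using (((hasDerivAt_id x).sub_const a).const_mul r).exp

section CharacteristicRoots

variable {σ η κ : ℝ}

theorem neg_add_div_sq_isRoot {s : ℝ} (hσ : σ ≠ 0) (hs : s ^ 2 = η ^ 2 + 2 * σ ^ 2 * κ) :
    σ ^ 2 / 2 * ((-η + s) / σ ^ 2) ^ 2 + η * ((-η + s) / σ ^ 2) - κ = 0 := by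
  field_simp
  linear_combination hs

theorem abs_lt_sqrt_discr (hσ : σ ≠ 0) (hκ : 0 < κ) : |η| < √(η ^ 2 + 2 * σ ^ 2 * κ) := by
  rw [Real.lt_sqrt (abs_nonneg η), sq_abs]
  have : 0 < σ ^ 2 := by positivity
  nlinarith

theorem neg_add_sqrt_discr_div_pos (hσ : σ ≠ 0) (hκ : 0 < κ) :
    0 < (-η + √(η ^ 2 + 2 * σ ^ 2 * κ)) / σ ^ 2 :=
  div_pos (by linarith [(abs_lt.1 (abs_lt_sqrt_discr (η := η) hσ hκ)).2]) (by positivity)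

theorem neg_sub_sqrt_discr_div_neg (hσ : σ ≠ 0) (hκ : 0 < κ) :
    (-η - √(η ^ 2 + 2 * σ ^ 2 * κ)) / σ ^ 2 < 0 :=
  div_neg_of_neg_of_pos (by linarith [(abs_lt.1 (abs_lt_sqrt_discr (η := η) hσ hκ)).1])
    (by positivity)

end CharacteristicRoots

section ValueFunction

variable {σ η δ γ b : ℝ}

theorem thetaP_isRoot (hσ : σ ≠ 0) (hδ : 0 ≤ δ) :
    σ ^ 2 / 2 * thetaP σ η δ ^ 2 + η * thetaP σ η δ - δ = 0 :=
  neg_add_div_sq_isRoot hσ (Real.sq_sqrt (by positivity))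

theorem thetaM_isRoot (hσ : σ ≠ 0) (hδ : 0 ≤ δ) :
    σ ^ 2 / 2 * thetaM σ η δ ^ 2 + η * thetaM σ η δ - δ = 0 := by
  rw [thetaM, sub_eq_add_neg]
  exact neg_add_div_sq_isRoot hσ (by rw [neg_sq, Real.sq_sqrt (by positivity)])

theorem lamGamma_isRoot (hσ : σ ≠ 0) (hγδ : 0 ≤ δ + γ) :
    σ ^ 2 / 2 * lamGamma σ η δ γ ^ 2 + η * lamGamma σ η δ γ - (δ + γ) = 0 := by
  rw [lamGamma, sub_eq_add_neg]
  exact neg_add_div_sq_isRoot hσ (by rw [neg_sq, Real.sq_sqrt (by positivity)])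

theorem hasDerivAt_h1 (x : ℝ) : HasDerivAt (h1 σ η δ) (h1' σ η δ x) x :=
  (hasDerivAt_exp_const_mul (thetaP σ η δ) x).sub
    (hasDerivAt_exp_const_mul (thetaM σ η δ) x)

theorem hasDerivAt_h1' (x : ℝ) : HasDerivAt (h1' σ η δ)
    (thetaP σ η δ ^ 2 * exp (thetaP σ η δ * x) - thetaM σ η δ ^ 2 * exp (thetaM σ η δ * x)) x :=
  (((hasDerivAt_exp_const_mul _ x).const_mul (thetaP σ η δ)).sub
    ((hasDerivAt_exp_const_mul _ x).const_mul (thetaM σ η δ))).congr_deriv (by ring)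

theorem h1_pos (hσ : σ ≠ 0) (hδ : 0 < δ) (hb : 0 < b) : 0 < h1 σ η δ b :=
  sub_pos.2 <| exp_lt_exp.2 <| mul_lt_mul_of_pos_right
    ((neg_sub_sqrt_discr_div_neg hσ hδ).trans (neg_add_sqrt_discr_div_pos hσ hδ)) hb

theorem h1'_pos (hσ : σ ≠ 0) (hδ : 0 < δ) (x : ℝ) : 0 < h1' σ η δ x :=
  sub_pos.2 <| (mul_neg_of_neg_of_pos (neg_sub_sqrt_discr_div_neg hσ hδ) (exp_pos _)).trans
    (mul_pos (neg_add_sqrt_discr_div_pos hσ hδ) (exp_pos _))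

theorem c11_denom_pos (hσ : σ ≠ 0) (hδ : 0 < δ) (hγ : 0 < γ) (hb : 0 < b) :
    0 < h1' σ η δ b - δ * lamGamma σ η δ γ / (γ + δ) * h1 σ η δ b := by
  have hlam : lamGamma σ η δ γ < 0 := neg_sub_sqrt_discr_div_neg hσ (by positivity)
  have : δ * lamGamma σ η δ γ / (γ + δ) < 0 :=
    div_neg_of_neg_of_pos (mul_neg_of_pos_of_neg hδ hlam) (by positivity)
  nlinarith [h1'_pos (η := η) hσ hδ b, h1_pos (η := η) hσ hδ hb]

theorem c11_mul_denom (hσ : σ ≠ 0) (hδ : 0 < δ) (hγ : 0 < γ) (hb : 0 < b) :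
    c11 σ η δ γ b * (h1' σ η δ b - δ * lamGamma σ η δ γ / (γ + δ) * h1 σ η δ b) =
      γ / (γ + δ) * (1 - η * lamGamma σ η δ γ / (γ + δ)) :=
  div_mul_cancel₀ _ (c11_denom_pos hσ hδ hγ hb).ne'

noncomputable def vLower (σ η δ γ b x : ℝ) : ℝ := c11 σ η δ γ b * h1 σ η δ x

noncomputable def vUpper (σ η δ γ b x : ℝ) : ℝ :=
  c12 σ η δ γ b * exp (lamGamma σ η δ γ * (x - b)) +
    γ / (γ + δ) * (x - b + vLower σ η δ γ b b + η / (γ + δ))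

theorem vGammaB_eq_ite :
    vGammaB σ η δ γ b = fun x => if x ≤ b then vLower σ η δ γ b x else vUpper σ η δ γ b x :=
  rfl

theorem contDiff_vLower {n : WithTop ℕ∞} : ContDiff ℝ n (vLower σ η δ γ b) := by
  unfold vLower h1; fun_prop

theorem contDiff_vUpper {n : WithTop ℕ∞} : ContDiff ℝ n (vUpper σ η δ γ b) := by
  unfold vUpper; fun_prop

theorem deriv_vLower :
    deriv (vLower σ η δ γ b) = fun x => c11 σ η δ γ b * h1' σ η δ x :=
  funext fun x => ((hasDerivAt_h1 x).const_mul _).deriv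

theorem deriv_deriv_vLower :
    deriv (deriv (vLower σ η δ γ b)) = fun x => c11 σ η δ γ b *
      (thetaP σ η δ ^ 2 * exp (thetaP σ η δ * x) - thetaM σ η δ ^ 2 * exp (thetaM σ η δ * x)) := by
  rw [deriv_vLower]
  exact funext fun x => ((hasDerivAt_h1' x).const_mul _).deriv

theorem deriv_vUpper :
    deriv (vUpper σ η δ γ b) = fun x =>
      c12 σ η δ γ b * (lamGamma σ η δ γ * exp (lamGamma σ η δ γ * (x - b))) + γ / (γ + δ) := by
  funext x
  have hlin : HasDerivAt (fun y => γ / (γ + δ) * (y - b + vLower σ η δ γ b b + η / (γ + δ)))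
      (γ / (γ + δ)) x := by
    simpa using ((((hasDerivAt_id x).sub_const b).add_const _).add_const _).const_mul (γ / (γ + δ))
  exact (((hasDerivAt_exp_const_mul_sub _ b x).const_mul _).add hlin).deriv

theorem deriv_deriv_vUpper :
    deriv (deriv (vUpper σ η δ γ b)) = fun x =>
      c12 σ η δ γ b * (lamGamma σ η δ γ ^ 2 * exp (lamGamma σ η δ γ * (x - b))) := by
  rw [deriv_vUpper]
  funext x
  exact ((((hasDerivAt_exp_const_mul_sub _ b x).const_mul (lamGamma σ η δ γ)).const_mul
    (c12 σ η δ γ b)).add_const _).deriv.trans (by ring)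

theorem vLower_ode (hσ : σ ≠ 0) (hδ : 0 ≤ δ) (x : ℝ) :
    σ ^ 2 / 2 * deriv (deriv (vLower σ η δ γ b)) x + η * deriv (vLower σ η δ γ b) x -
      δ * vLower σ η δ γ b x = 0 := by
  rw [deriv_deriv_vLower, deriv_vLower]
  simp only [vLower, h1, h1']
  linear_combination c11 σ η δ γ b * exp (thetaP σ η δ * x) * thetaP_isRoot hσ hδ -
    c11 σ η δ γ b * exp (thetaM σ η δ * x) * thetaM_isRoot hσ hδ

theorem vUpper_ode (hσ : σ ≠ 0) (hγδ : 0 < γ + δ) (x : ℝ) :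
    σ ^ 2 / 2 * deriv (deriv (vUpper σ η δ γ b)) x + η * deriv (vUpper σ η δ γ b) x -
      δ * vUpper σ η δ γ b x + γ * (x - b + vLower σ η δ γ b b - vUpper σ η δ γ b x) = 0 := by
  rw [deriv_deriv_vUpper, deriv_vUpper]
  simp only [vUpper]
  field_simp
  linear_combination 2 * (γ + δ) ^ 2 * c12 σ η δ γ b * exp (lamGamma σ η δ γ * (x - b)) *
    lamGamma_isRoot hσ (by linarith : 0 ≤ δ + γ)

theorem vLower_eq_vUpper_at_b (hγδ : γ + δ ≠ 0) : vLower σ η δ γ b b = vUpper σ η δ γ b b := by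
  simp only [vUpper, c12, vLower, sub_self, mul_zero, exp_zero, mul_one]
  field_simp
  ring

theorem deriv_vLower_eq_deriv_vUpper_at_b (hσ : σ ≠ 0) (hδ : 0 < δ) (hγ : 0 < γ) (hb : 0 < b) :
    deriv (vLower σ η δ γ b) b = deriv (vUpper σ η δ γ b) b := by
  have hc11 := c11_mul_denom (η := η) hσ hδ hγ hb
  rw [deriv_vUpper, deriv_vLower]
  simp only [c12, sub_self, mul_zero, exp_zero, mul_one]
  field_simp at hc11 ⊢
  linear_combination hc11

theorem deriv_deriv_vLower_eq_deriv_deriv_vUpper_at_b (hσ : σ ≠ 0) (hδ : 0 < δ) (hγ : 0 < γ)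
    (hb : 0 < b) :
    deriv (deriv (vLower σ η δ γ b)) b = deriv (deriv (vUpper σ η δ γ b)) b := by
  have hUpper := vUpper_ode (η := η) (b := b) hσ (by positivity : 0 < γ + δ) b
  rw [← vLower_eq_vUpper_at_b (by positivity), ← deriv_vLower_eq_deriv_vUpper_at_b hσ hδ hγ hb]
    at hUpper
  have hLower := vLower_ode (η := η) (γ := γ) (b := b) hσ hδ.le b
  have : σ ^ 2 / 2 ≠ 0 := by positivity
  exact mul_left_cancel₀ this (by linear_combination hLower - hUpper)

end ValueFunction

theorem vGammaB_solves_NLPDS_general (σ η δ γ b : ℝ)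
    (hσ : 0 < σ) (hδ : 0 < δ) (hγ : 0 < γ) (hb : 0 < b) :
    ContDiffOn ℝ 2 (vGammaB σ η δ γ b) (Set.Ioi 0) ∧
    vGammaB σ η δ γ b 0 = 0 ∧
    (∀ x ∈ Set.Ioo 0 b,
      σ ^ 2 / 2 * deriv (deriv (vGammaB σ η δ γ b)) x +
        η * deriv (vGammaB σ η δ γ b) x - δ * vGammaB σ η δ γ b x = 0) ∧
    (∀ x ∈ Set.Ioi b,
      σ ^ 2 / 2 * deriv (deriv (vGammaB σ η δ γ b)) x +
        η * deriv (vGammaB σ η δ γ b) x - δ * vGammaB σ η δ γ b x +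
        γ * (x - b + vGammaB σ η δ γ b b - vGammaB σ η δ γ b x) = 0) := by
  have h₀ := vLower_eq_vUpper_at_b (σ := σ) (η := η) (b := b) (by positivity : γ + δ ≠ 0)
  have h₁ := deriv_vLower_eq_deriv_vUpper_at_b (η := η) hσ.ne' hδ hγ hb
  have h₂ := deriv_deriv_vLower_eq_deriv_deriv_vUpper_at_b (η := η) hσ.ne' hδ hγ hb
  have hderiv := deriv_ite_le (contDiff_vLower (n := 1)).differentiable_one
    (contDiff_vUpper (n := 1)).differentiable_one h₀ h₁
  have hderiv2 := deriv_ite_le (contDiff_vLower (n := 2)).differentiable_deriv_two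
    (contDiff_vUpper (n := 2)).differentiable_deriv_two h₁ h₂
  refine ⟨?_, ?_, fun x hx => ?_, fun x hx => ?_⟩
  · refine (contDiff_ite_le (n := 2) contDiff_vLower contDiff_vUpper fun k hk => ?_).contDiffOn
    interval_cases k <;> simp [iteratedDeriv_succ, h₀, h₁, h₂]
  · simp [vGammaB, hb.le, h1]
  · rw [vGammaB_eq_ite, hderiv, hderiv2]
    simpa only [if_pos hx.2.le] using vLower_ode hσ.ne' hδ.le x
  · rw [vGammaB_eq_ite, hderiv, hderiv2]
    simpa only [if_neg (not_le.2 (mem_Ioi.1 hx)), le_rfl, if_true]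
      using vUpper_ode hσ.ne' (by positivity) x

theorem vGammaB_solves_NLPDS (σ η δ γ b : ℝ)
    (hσ : 0 < σ) (hη : 0 < η) (hδ : 0 < δ) (hγ : 0 < γ) (hb : 0 < b) :
    ContDiffOn ℝ 2 (vGammaB σ η δ γ b) (Set.Ioi 0) ∧
    vGammaB σ η δ γ b 0 = 0 ∧
    (∀ x ∈ Set.Ioo 0 b,
      σ ^ 2 / 2 * deriv (deriv (vGammaB σ η δ γ b)) x +
        η * deriv (vGammaB σ η δ γ b) x - δ * vGammaB σ η δ γ b x = 0) ∧
    (∀ x ∈ Set.Ioi b,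
      σ ^ 2 / 2 * deriv (deriv (vGammaB σ η δ γ b)) x +
        η * deriv (vGammaB σ η δ γ b) x - δ * vGammaB σ η δ γ b x +
        γ * (x - b + vGammaB σ η δ γ b b - vGammaB σ η δ γ b x) = 0) :=
  vGammaB_solves_NLPDS_general σ η δ γ b hσ hδ hγ hb
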